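/- (Lemma 1, FFT form of the quadratic forms over all time offsets.) Let L ≥ 1 and D ≥ 0 be integers, set P = L + D, let p ∈ ℂ^L, and for t ∈ {0, …, D} let p(t) ∈ ℂ^P be the vector whose entries are p(t)_k = p_{k−t} for t < k ≤ t + L and p(t)_k = 0 otherwise. Let F = F_P be the P-dimensional DFT matrix, F_{n,m} = e^{−2πi(n−1)(m−1)/P}. Then for every Hermitian X ∈ ℂ^{P×P} and every t ∈ {0, …, D}: p(t)^H X p(t) = (2/P) · Re( ( F · [ (F^H Ψ(X)) ⊙ (F Ψ(p(0)^* p(0)^T)) ] · 1_P )_{t+1} ), where 1_P is the all-one vector and ⊙ is the entrywise product of matrices. -/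
import Mathlib


open Matrix Complex Finset

/-- The `k`-th super-diagonal vector `ψ_k(B)` (0-based `k`): entry `ℓ` equals
`c_k · B_{ℓ, ℓ+k}` when `ℓ + k < K` and `0` otherwise, where `c_0 = √2/2` and `c_k = 1`
for `k ≥ 1` (this matches the paper's 1-based `ψ_{k+1}`). -/
noncomputable def psi (K : ℕ) (k : Fin K) (B : Matrix (Fin K) (Fin K) ℂ) : Fin K → ℂ :=
  fun ℓ =>
    if h : (ℓ : ℕ) + (k : ℕ) < K then
      (if (k : ℕ) = 0 then ((Real.sqrt 2 / 2 : ℝ) : ℂ) else 1) * B ℓ ⟨(ℓ : ℕ) + (k : ℕ), h⟩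
    else 0

/-- `Ψ(B)`: the matrix whose `k`-th column is `ψ_k(B)`. -/
noncomputable def bigPsi (K : ℕ) (B : Matrix (Fin K) (Fin K) ℂ) : Matrix (Fin K) (Fin K) ℂ :=
  Matrix.of fun ℓ k => psi K k B ℓ

/-- The `K`-dimensional DFT matrix (0-based indices): `F_{n,m} = e^{-2πi·n·m/K}`. -/
noncomputable def dft (K : ℕ) : Matrix (Fin K) (Fin K) ℂ :=
  Matrix.of fun n m : Fin K =>
    Complex.exp (-(2 * (Real.pi : ℂ) * Complex.I * ((n : ℕ) : ℂ) * ((m : ℕ) : ℂ)) / (K : ℂ))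

/-- The zero-padded, time-shifted pilot `p(t) ∈ ℂ^{L+D}` (0-based): entry `k` equals
`p_{k-t}` when `t ≤ k < t + L` and `0` otherwise. -/
def shiftPad (L D : ℕ) (p : Fin L → ℂ) (t : ℕ) : Fin (L + D) → ℂ :=
  fun k => if h : t ≤ (k : ℕ) ∧ (k : ℕ) - t < L then p ⟨(k : ℕ) - t, h.2⟩ else 0


lemma sum_exp_eq (P : ℕ) (hP : 0 < P) (j : ℤ) :
    ∑ n : Fin P, Complex.exp (2 * (Real.pi:ℂ) * I * (j:ℂ) * (n:ℕ) / P) =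
      if (P:ℤ) ∣ j then (P:ℂ) else 0 := by
  have hPc : (P:ℂ) ≠ 0 := Nat.cast_ne_zero.mpr hP.ne'
  have hpi : (Real.pi:ℂ) ≠ 0 := by exact_mod_cast Real.pi_ne_zero
  by_cases h : (P:ℤ) ∣ j
  · rw [if_pos h]
    obtain ⟨c, rfl⟩ := h
    have he : ∀ n : Fin P, Complex.exp (2 * (Real.pi:ℂ) * I * ((((P:ℤ) * c : ℤ)) : ℂ) * ((n:ℕ):ℂ) / P) = 1 := by
      intro n
      have harg : 2 * (Real.pi:ℂ) * I * ((((P:ℤ) * c : ℤ)) : ℂ) * ((n:ℕ):ℂ) / P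
          = ((c * n : ℤ) : ℂ) * (2 * Real.pi * I) := by
        push_cast; field_simp
      rw [harg, Complex.exp_int_mul_two_pi_mul_I]
    rw [Finset.sum_congr rfl fun n _ => he n]
    simp
  · rw [if_neg h]
    set r : ℂ := Complex.exp (2 * (Real.pi:ℂ) * I * j / P) with hr
    have hterm : ∀ n : Fin P, Complex.exp (2 * (Real.pi:ℂ) * I * (j:ℂ) * ((n:ℕ):ℂ) / P) = r ^ (n:ℕ) := by
      intro n
      rw [hr, ← Complex.exp_nat_mul]
      congr 1; push_cast; ring
    have hr1 : r ≠ 1 := by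
      intro hr1
      rw [hr, Complex.exp_eq_one_iff] at hr1
      obtain ⟨n, hn⟩ := hr1
      apply h
      refine ⟨n, ?_⟩
      field_simp at hn
      have h2 : (2:ℂ) * Real.pi * I ≠ 0 := by simp [Real.pi_ne_zero, I_ne_zero]
      have : (j:ℂ) = (P:ℂ) * n := by
        apply mul_left_cancel₀ h2
        rw [hn]
      exact_mod_cast this
    have hrP : r ^ P = 1 := by
      rw [hr, ← Complex.exp_nat_mul]
      have harg : (P:ℂ) * (2 * (Real.pi:ℂ) * I * j / P) = ((j:ℤ):ℂ) * (2 * Real.pi * I) := by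
        field_simp
      rw [harg, Complex.exp_int_mul_two_pi_mul_I]
    calc ∑ n : Fin P, Complex.exp (2 * (Real.pi:ℂ) * I * (j:ℂ) * ((n:ℕ):ℂ) / P)
        = ∑ n : Fin P, r ^ (n:ℕ) := Finset.sum_congr rfl fun n _ => hterm n
      _ = ∑ n ∈ Finset.range P, r ^ n := (Fin.sum_univ_eq_sum_range _ _)
      _ = (r ^ P - 1) / (r - 1) := geom_sum_eq hr1 P
      _ = 0 := by rw [hrP]; simp

lemma dvd_iff_mod (P : ℕ) (hP : 0 < P) (τ ℓ m : Fin P) :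
    (P:ℤ) ∣ ((ℓ:ℕ):ℤ) - ((τ:ℕ):ℤ) - ((m:ℕ):ℤ) ↔ (ℓ:ℕ) = ((τ:ℕ)+(m:ℕ)) % P := by
  set s : ℕ := ((τ:ℕ)+(m:ℕ)) % P with hs
  set q : ℕ := ((τ:ℕ)+(m:ℕ)) / P with hq
  have hsq : s + P * q = (τ:ℕ) + (m:ℕ) := Nat.mod_add_div _ _
  have hslt : s < P := Nat.mod_lt _ hP
  have hrw : ((ℓ:ℕ):ℤ) - ((τ:ℕ):ℤ) - ((m:ℕ):ℤ) = (((ℓ:ℕ):ℤ) - s) - P * q := by omega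
  rw [hrw]
  constructor
  · intro h
    have h2 : (P:ℤ) ∣ ((ℓ:ℕ):ℤ) - s := by
      have := h.add (dvd_mul_right (P:ℤ) (q:ℤ))
      simpa using this
    have := Int.eq_zero_of_abs_lt_dvd h2 (by
      have := ℓ.isLt
      rw [abs_lt]; omega)
    omega
  · intro h
    have hz : ((ℓ:ℕ):ℤ) - s = 0 := by omega
    rw [hz]
    exact dvd_sub (dvd_zero _) (dvd_mul_right _ _)

lemma dft_triple (P : ℕ) (hP : 0 < P) (τ ℓ m : Fin P) :
    ∑ n : Fin P, dft P τ n * star (dft P ℓ n) * dft P n m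
      = if (ℓ:ℕ) = ((τ:ℕ)+(m:ℕ)) % P then (P:ℂ) else 0 := by
  have hterm : ∀ n : Fin P, dft P τ n * star (dft P ℓ n) * dft P n m
      = Complex.exp (2 * (Real.pi:ℂ) * I * ((((ℓ:ℕ):ℤ) - ((τ:ℕ):ℤ) - ((m:ℕ):ℤ) : ℤ):ℂ) * (n:ℕ) / P) := by
    intro n
    have hstar : star (dft P ℓ n)
        = Complex.exp ((2 * (Real.pi : ℂ) * Complex.I * ((ℓ : ℕ) : ℂ) * ((n : ℕ) : ℂ)) / (P : ℂ)) := by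
      show (starRingEnd ℂ) (dft P ℓ n) = _
      rw [dft, Matrix.of_apply, ← Complex.exp_conj]
      congr 1
      simp [map_div₀, Complex.conj_I, map_ofNat]
    rw [hstar, dft, Matrix.of_apply, Matrix.of_apply, ← Complex.exp_add, ← Complex.exp_add]
    congr 1
    push_cast
    by_cases hPc : (P:ℂ) = 0
    · simp [hPc]
    · field_simp
      ring
  rw [Finset.sum_congr rfl fun n _ => hterm n, sum_exp_eq P hP]
  simp only [dvd_iff_mod P hP τ ℓ m]

lemma key (P : ℕ) (hP : 0 < P) (Y Z : Matrix (Fin P) (Fin P) ℂ) (τ : Fin P) :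
    ((dft P * Matrix.hadamard ((dft P)ᴴ * Y) (dft P * Z)) *ᵥ fun _ => (1:ℂ)) τ
    = (P:ℂ) * ∑ k, ∑ m, Z m k * Y ⟨((τ:ℕ)+(m:ℕ)) % P, Nat.mod_lt _ hP⟩ k := by
  simp only [mulVec, dotProduct, Matrix.mul_apply, Matrix.hadamard_apply,
    Matrix.conjTranspose_apply, mul_one]
  rw [Finset.mul_sum]
  refine Finset.sum_congr rfl fun k _ => ?_
  calc ∑ n, dft P τ n * ((∑ ℓ, star (dft P ℓ n) * Y ℓ k) * (∑ m, dft P n m * Z m k))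
      = ∑ n, ∑ ℓ, ∑ m, (dft P τ n * star (dft P ℓ n) * dft P n m) * (Y ℓ k * Z m k) := by
        refine Finset.sum_congr rfl fun n _ => ?_
        rw [Finset.sum_mul_sum, Finset.mul_sum]
        refine Finset.sum_congr rfl fun ℓ _ => ?_
        rw [Finset.mul_sum]
        exact Finset.sum_congr rfl fun m _ => by ring
    _ = ∑ ℓ, ∑ m, (∑ n, dft P τ n * star (dft P ℓ n) * dft P n m) * (Y ℓ k * Z m k) := by
        rw [Finset.sum_comm]
        refine Finset.sum_congr rfl fun ℓ _ => ?_
        rw [Finset.sum_comm]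
        exact Finset.sum_congr rfl fun m _ => (Finset.sum_mul _ _ _).symm
    _ = ∑ m : Fin P, ∑ ℓ : Fin P, (if ℓ = (⟨((τ:ℕ)+(m:ℕ)) % P, Nat.mod_lt _ hP⟩ : Fin P) then (P:ℂ) else 0)
          * (Y ℓ k * Z m k) := by
        rw [Finset.sum_comm]
        refine Finset.sum_congr rfl fun m _ => Finset.sum_congr rfl fun ℓ _ => ?_
        rw [dft_triple P hP]
        congr 1
        simp [Fin.ext_iff]
    _ = ∑ m : Fin P, (P:ℂ) * (Y (⟨((τ:ℕ)+(m:ℕ)) % P, Nat.mod_lt _ hP⟩ : Fin P) k * Z m k) := by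
        refine Finset.sum_congr rfl fun m _ => ?_
        simp only [ite_mul, zero_mul]
        rw [Finset.sum_ite_eq' Finset.univ]
        simp
    _ = (P:ℂ) * ∑ m : Fin P, Z m k * Y (⟨((τ:ℕ)+(m:ℕ)) % P, Nat.mod_lt _ hP⟩ : Fin P) k := by
        rw [Finset.mul_sum]
        exact Finset.sum_congr rfl fun m _ => by ring

theorem stmt_11 (L D : ℕ) (hL : 1 ≤ L)
    (X : Matrix (Fin (L + D)) (Fin (L + D)) ℂ) (hX : X.IsHermitian)
    (p : Fin L → ℂ) (t : ℕ) (ht : t ≤ D) :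
    star (shiftPad L D p t) ⬝ᵥ X *ᵥ shiftPad L D p t
      = (((2 / ((L + D : ℕ) : ℝ)) *
          (((dft (L + D) *
                Matrix.hadamard ((dft (L + D))ᴴ * bigPsi (L + D) X)
                  (dft (L + D) *
                    bigPsi (L + D) (vecMulVec (star (shiftPad L D p 0)) (shiftPad L D p 0)))) *ᵥ
              fun _ => (1 : ℂ)) ⟨t, by omega⟩).re : ℝ) : ℂ) := by
  have hXs : ∀ i j, star (X i j) = X j i := fun i j => hX.apply j i
  have hP : 0 < L + D := by omega
  haveI : NeZero (L + D) := ⟨by omega⟩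
  set p0 : Fin (L + D) → ℂ := shiftPad L D p 0 with hp0
  set pt : Fin (L + D) → ℂ := shiftPad L D p t with hptdef
  set A : Matrix (Fin (L + D)) (Fin (L + D)) ℂ := vecMulVec (star p0) p0 with hA
  set c : Fin (L + D) := ⟨t, by omega⟩ with hc
  set sh : Fin (L + D) → Fin (L + D) := fun a => a + c with hshdef
  have hsh : ∀ a : Fin (L + D), ((sh a : Fin (L + D)) : ℕ) = ((a:ℕ) + t) % (L + D) := by
    intro a; simp [hshdef, Fin.add_def, hc]
  -- support of p0
  have hsupp : ∀ a : Fin (L + D), p0 a ≠ 0 → (a:ℕ) < L := by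
    intro a h
    by_contra hcon
    apply h
    rw [hp0, shiftPad, dif_neg]
    omega
  -- pt ∘ sh = p0
  have hpt : ∀ a : Fin (L + D), pt (sh a) = p0 a := by
    intro a
    by_cases ha : (a:ℕ) < L
    · have hv : ((sh a : Fin (L + D)) : ℕ) = (a:ℕ) + t := by
        rw [hsh a, Nat.mod_eq_of_lt (by omega)]
      rw [hptdef, hp0, shiftPad, shiftPad, dif_pos (by omega), dif_pos (by constructor <;> omega)]
      congr 1
      ext
      simp [hv]
    · have h0 : p0 a = 0 := by rw [hp0, shiftPad, dif_neg]; omega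
      rw [h0, hptdef, shiftPad, dif_neg]
      rw [hsh a]
      rcases Nat.lt_or_ge ((a:ℕ) + t) (L + D) with h1 | h1
      · rw [Nat.mod_eq_of_lt h1]; omega
      · have hlt : (a:ℕ) + t - (L + D) < (L + D) := by have := a.isLt; omega
        have : ((a:ℕ) + t) % (L + D) = (a:ℕ) + t - (L + D) := by
          rw [Nat.mod_eq_sub_mod h1, Nat.mod_eq_of_lt hlt]
        rw [this]
        have := a.isLt
        omega
  -- the quadratic form terms
  set q : Fin (L + D) → Fin (L + D) → ℂ := fun a b => star (p0 a) * p0 b * X (sh a) (sh b) with hq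
  have hq_star : ∀ a b : Fin (L + D), q b a = star (q a b) := by
    intro a b
    rw [hq]
    simp only [star_mul', star_star]
    rw [hXs (sh a) (sh b)]
    ring
  -- LHS as a double sum
  set e : Fin (L + D) ≃ Fin (L + D) := Equiv.addRight c with he
  have hLHS : star pt ⬝ᵥ X *ᵥ pt = ∑ a : Fin (L + D), ∑ b : Fin (L + D), q a b := by
    calc star pt ⬝ᵥ X *ᵥ pt = ∑ ℓ : Fin (L + D), ∑ m : Fin (L + D), star (pt ℓ) * X ℓ m * pt m := by
          simp only [dotProduct, mulVec, Pi.star_apply, Finset.mul_sum]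
          exact Finset.sum_congr rfl fun ℓ _ => Finset.sum_congr rfl fun m _ => by ring
      _ = ∑ a : Fin (L + D), ∑ b : Fin (L + D), star (pt (e a)) * X (e a) (e b) * pt (e b) := by
          rw [← Equiv.sum_comp e (fun ℓ => ∑ m : Fin (L + D), star (pt ℓ) * X ℓ m * pt m)]
          exact Finset.sum_congr rfl fun a _ =>
            (Equiv.sum_comp e (fun m => star (pt (e a)) * X (e a) m * pt m)).symm
      _ = ∑ a : Fin (L + D), ∑ b : Fin (L + D), q a b := by
          refine Finset.sum_congr rfl fun a _ => Finset.sum_congr rfl fun b _ => ?_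
          have hea : e a = sh a := rfl
          have heb : e b = sh b := rfl
          rw [hea, heb, hpt a, hpt b, hq]
          ring

  -- helper: index equality
  have hidx : ∀ m : Fin (L + D),
      (⟨(((⟨t, by omega⟩ : Fin (L + D)) : ℕ) + (m:ℕ)) % (L + D), Nat.mod_lt _ hP⟩ : Fin (L + D))
        = sh m := by
    intro m
    apply Fin.ext
    rw [hsh]
    simp [Nat.add_comm]
  set z : ℂ := ∑ k : Fin (L + D), ∑ m : Fin (L + D),
      psi (L + D) k A m * psi (L + D) k X (sh m) with hzdef
  have hkey2 : ((dft (L + D) *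
      Matrix.hadamard ((dft (L + D))ᴴ * bigPsi (L + D) X) (dft (L + D) * bigPsi (L + D) A)) *ᵥ
        fun _ => (1 : ℂ)) ⟨t, by omega⟩ = ((L + D : ℕ) : ℂ) * z := by
    rw [key (L + D) hP (bigPsi (L + D) X) (bigPsi (L + D) A) ⟨t, by omega⟩]
    congr 1
    refine Finset.sum_congr rfl fun k _ => Finset.sum_congr rfl fun m _ => ?_
    rw [hidx m]
    rfl
  rw [hLHS, hkey2]
  -- simplify the real part
  have hre : ((((L + D : ℕ) : ℂ)) * z).re = ((L + D : ℕ) : ℝ) * z.re := by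
    simp [Complex.mul_re]
  rw [hre]
  have hfield : 2 / ((L + D : ℕ) : ℝ) * (((L + D : ℕ) : ℝ) * z.re) = 2 * z.re := by
    have : ((L + D : ℕ) : ℝ) ≠ 0 := Nat.cast_ne_zero.mpr hP.ne'
    field_simp
  rw [hfield, ← Complex.add_conj]
  -- decompose the double sum
  set Dg : ℂ := ∑ a : Fin (L + D), q a a with hDg
  set U : ℂ := ∑ a : Fin (L + D), ∑ b : Fin (L + D), if a < b then q a b else 0 with hU
  have tri : ∀ a b : Fin (L + D), q a b =
      (if a < b then q a b else 0) + (if a = b then q a b else 0) +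
        (if b < a then q a b else 0) := by
    intro a b
    rcases lt_trichotomy a b with h | h | h
    · simp [h, h.ne, not_lt_of_gt h]
    · simp [h, lt_irrefl]
    · simp [h, h.ne', not_lt_of_gt h]
  have hSsplit : ∑ a : Fin (L + D), ∑ b : Fin (L + D), q a b = U + Dg + star U := by
    have h1 : ∑ a : Fin (L + D), ∑ b : Fin (L + D), q a b
        = U + ((∑ a : Fin (L + D), ∑ b : Fin (L + D), if a = b then q a b else 0)
            + ∑ a : Fin (L + D), ∑ b : Fin (L + D), if b < a then q a b else 0) := by
      rw [hU, ← Finset.sum_add_distrib]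
      rw [← Finset.sum_add_distrib]
      refine Finset.sum_congr rfl fun a _ => ?_
      rw [← Finset.sum_add_distrib, ← Finset.sum_add_distrib]
      exact Finset.sum_congr rfl fun b _ => by rw [← add_assoc]; exact tri a b
    have h2 : (∑ a : Fin (L + D), ∑ b : Fin (L + D), if a = b then q a b else 0) = Dg := by
      refine Finset.sum_congr rfl fun a _ => ?_
      rw [Finset.sum_ite_eq Finset.univ a (q a)]
      simp
    have h3 : (∑ a : Fin (L + D), ∑ b : Fin (L + D), if b < a then q a b else 0) = star U := by
      rw [hU]
      rw [star_sum]
      rw [Finset.sum_comm]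
      refine Finset.sum_congr rfl fun a _ => ?_
      rw [star_sum]
      refine Finset.sum_congr rfl fun b _ => ?_
      rw [apply_ite (star : ℂ → ℂ), star_zero, ← hq_star a b]
    rw [h1, h2, h3]
    ring
  rw [hSsplit]
  -- the k = 0 column of z
  have hzero : ∀ m : Fin (L + D),
      psi (L + D) 0 A m * psi (L + D) 0 X (sh m) = (1/2 : ℂ) * q m m := by
    intro m
    have hm0 : (m : ℕ) + ((0 : Fin (L + D)) : ℕ) < L + D := by
      simpa using m.isLt
    have hs0 : ((sh m : Fin (L + D)) : ℕ) + ((0 : Fin (L + D)) : ℕ) < L + D := by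
      simpa using (sh m).isLt
    rw [psi, psi, dif_pos hm0, dif_pos hs0]
    have e1 : (⟨(m : ℕ) + ((0 : Fin (L + D)) : ℕ), hm0⟩ : Fin (L + D)) = m := by
      apply Fin.ext; simp
    have e2 : (⟨((sh m : Fin (L + D)) : ℕ) + ((0 : Fin (L + D)) : ℕ), hs0⟩ : Fin (L + D)) = sh m := by
      apply Fin.ext; simp
    rw [e1, e2]
    simp only [Fin.val_zero, if_pos rfl]
    have hA' : A m m = star (p0 m) * p0 m := by rw [hA, vecMulVec_apply]; rfl
    have hsq : ((Real.sqrt 2 / 2 : ℝ) : ℂ) * ((Real.sqrt 2 / 2 : ℝ) : ℂ) = (1/2 : ℂ) := by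
      rw [← Complex.ofReal_mul]
      have h2 : Real.sqrt 2 * Real.sqrt 2 = 2 := Real.mul_self_sqrt (by norm_num)
      have : Real.sqrt 2 / 2 * (Real.sqrt 2 / 2) = 1/2 := by
        rw [div_mul_div_comm, h2]
        norm_num
      rw [this]
      norm_num
    rw [hA', hq]
    calc ((Real.sqrt 2 / 2 : ℝ) : ℂ) * (star (p0 m) * p0 m) *
          (((Real.sqrt 2 / 2 : ℝ) : ℂ) * X (sh m) (sh m))
        = (((Real.sqrt 2 / 2 : ℝ) : ℂ) * ((Real.sqrt 2 / 2 : ℝ) : ℂ)) *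
            (star (p0 m) * p0 m * X (sh m) (sh m)) := by ring
      _ = (1/2 : ℂ) * (star (p0 m) * p0 m * X (sh m) (sh m)) := by rw [hsq]

  -- term identification for k ≠ 0
  have hterm : ∀ (k m : Fin (L + D)), k ≠ 0 →
      psi (L + D) k A m * psi (L + D) k X (sh m)
        = if h : (m:ℕ) + (k:ℕ) < L + D then q m ⟨(m:ℕ)+(k:ℕ), h⟩ else 0 := by
    intro k m hk
    have hk' : (k:ℕ) ≠ 0 := fun h => hk (Fin.ext (by simp [h]))
    by_cases hmk : (m:ℕ) + (k:ℕ) < L + D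
    · rw [dif_pos hmk]
      simp only [psi, dif_pos hmk, if_neg hk', one_mul]
      have hAmk : A m ⟨(m:ℕ)+(k:ℕ), hmk⟩ = star (p0 m) * p0 ⟨(m:ℕ)+(k:ℕ), hmk⟩ := by
        rw [hA, vecMulVec_apply]; rfl
      by_cases hz1 : p0 m = 0
      · simp [hAmk, hz1, hq]
      by_cases hz2 : p0 ⟨(m:ℕ)+(k:ℕ), hmk⟩ = 0
      · simp [hAmk, hz2, hq]
      have hmL : (m:ℕ) < L := hsupp m hz1
      have hbL : (m:ℕ)+(k:ℕ) < L := hsupp _ hz2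
      have hshm : ((sh m) : ℕ) = (m:ℕ) + t := by
        rw [hsh m]; exact Nat.mod_eq_of_lt (by omega)
      have hcond : ((sh m):ℕ) + (k:ℕ) < L + D := by rw [hshm]; omega
      rw [dif_pos hcond]
      have hidx2 : (⟨((sh m):ℕ) + (k:ℕ), hcond⟩ : Fin (L+D)) = sh ⟨(m:ℕ)+(k:ℕ), hmk⟩ := by
        apply Fin.ext
        rw [hsh ⟨(m:ℕ)+(k:ℕ), hmk⟩]
        show ((sh m):ℕ) + (k:ℕ) = ((m:ℕ)+(k:ℕ) + t) % (L+D)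
        rw [hshm, Nat.mod_eq_of_lt (by omega)]
        omega
      rw [hidx2, hAmk, hq]
      try ring
    · rw [dif_neg hmk]
      simp only [psi, dif_neg hmk, zero_mul]

  have haddval : ∀ a b : Fin (L + D), (a:ℕ) + (b:ℕ) < L + D →
      ((a + b : Fin (L + D)) : ℕ) = (a:ℕ) + (b:ℕ) := by
    intro a b h
    rw [Fin.add_def]
    exact Nat.mod_eq_of_lt h
  have hsubval : ∀ a b : Fin (L + D), (a:ℕ) ≤ (b:ℕ) →
      ((b - a : Fin (L + D)) : ℕ) = (b:ℕ) - (a:ℕ) := by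
    intro a b h
    rw [Fin.sub_def]
    show (((L+D) - (a:ℕ)) + (b:ℕ)) % (L+D) = (b:ℕ) - (a:ℕ)
    have hb := b.isLt
    have ha := a.isLt
    have h1 : ((L+D) - (a:ℕ)) + (b:ℕ) = (L+D) + ((b:ℕ) - (a:ℕ)) := by omega
    rw [h1, Nat.add_mod_left, Nat.mod_eq_of_lt (by omega)]
  have hoff : (∑ k ∈ Finset.univ.erase (0 : Fin (L + D)), ∑ m : Fin (L + D),
      psi (L + D) k A m * psi (L + D) k X (sh m)) = U := by
    have step1 : (∑ k ∈ Finset.univ.erase (0 : Fin (L + D)), ∑ m : Fin (L + D),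
        psi (L + D) k A m * psi (L + D) k X (sh m))
        = ∑ x ∈ (Finset.univ.erase (0 : Fin (L + D))) ×ˢ (Finset.univ : Finset (Fin (L + D))),
            (if (x.2:ℕ) + (x.1:ℕ) < L + D then q x.2 (x.2 + x.1) else 0) := by
      rw [Finset.sum_product]
      refine Finset.sum_congr rfl fun k hk => Finset.sum_congr rfl fun m _ => ?_
      rw [hterm k m (Finset.mem_erase.mp hk).1]
      by_cases hmk : (m:ℕ) + (k:ℕ) < L + D
      · rw [dif_pos hmk, if_pos hmk]
        congr 1
        apply Fin.ext
        rw [haddval m k hmk]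
      · rw [dif_neg hmk, if_neg hmk]
    rw [step1, ← Finset.sum_filter]
    have step2 : (∑ x ∈ ((Finset.univ.erase (0 : Fin (L + D))) ×ˢ
          (Finset.univ : Finset (Fin (L + D)))).filter
          (fun x => (x.2:ℕ) + (x.1:ℕ) < L + D), q x.2 (x.2 + x.1))
        = ∑ y ∈ (Finset.univ ×ˢ Finset.univ : Finset (Fin (L+D) × Fin (L+D))).filter
            (fun y => y.1 < y.2), q y.1 y.2 := by
      refine Finset.sum_nbij' (fun x => (x.2, x.2 + x.1)) (fun y => (y.2 - y.1, y.1))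
        ?_ ?_ ?_ ?_ ?_
      · intro x hx
        obtain ⟨hx1, hx2⟩ := Finset.mem_filter.mp hx
        have hk0 : x.1 ≠ 0 := (Finset.mem_erase.mp (Finset.mem_product.mp hx1).1).1
        have hk0' : (x.1:ℕ) ≠ 0 := fun h => hk0 (Fin.ext (by simp [h]))
        refine Finset.mem_filter.mpr ⟨Finset.mem_product.mpr
          ⟨Finset.mem_univ _, Finset.mem_univ _⟩, ?_⟩
        show x.2 < x.2 + x.1
        rw [Fin.lt_def, haddval x.2 x.1 hx2]
        omega
      · intro y hy
        have hy2 : y.1 < y.2 := (Finset.mem_filter.mp hy).2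
        have hlt : (y.1:ℕ) < (y.2:ℕ) := hy2
        have hsub : ((y.2 - y.1 : Fin (L + D)) : ℕ) = (y.2:ℕ) - (y.1:ℕ) :=
          hsubval y.1 y.2 (le_of_lt hlt)
        refine Finset.mem_filter.mpr ⟨Finset.mem_product.mpr ⟨?_, Finset.mem_univ _⟩, ?_⟩
        · refine Finset.mem_erase.mpr ⟨?_, Finset.mem_univ _⟩
          intro h
          have := congrArg Fin.val h
          rw [hsub] at this
          simp at this
          omega
        · show (y.1:ℕ) + ((y.2 - y.1 : Fin (L + D)) : ℕ) < L + D
          rw [hsub]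
          have := y.2.isLt
          omega
      · intro x hx
        obtain ⟨hx1, hx2⟩ := Finset.mem_filter.mp hx
        have hadd : ((x.2 + x.1 : Fin (L + D)) : ℕ) = (x.2:ℕ) + (x.1:ℕ) := haddval x.2 x.1 hx2
        have : (x.2 + x.1 - x.2 : Fin (L + D)) = x.1 := by
          apply Fin.ext
          rw [hsubval x.2 (x.2 + x.1) (by rw [hadd]; omega), hadd]
          omega
        show (x.2 + x.1 - x.2, x.2) = x
        rw [this]
      · intro y hy
        have hy2 : y.1 < y.2 := (Finset.mem_filter.mp hy).2
        have hlt : (y.1:ℕ) < (y.2:ℕ) := hy2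
        have hsub : ((y.2 - y.1 : Fin (L + D)) : ℕ) = (y.2:ℕ) - (y.1:ℕ) :=
          hsubval y.1 y.2 (le_of_lt hlt)
        have : (y.1 + (y.2 - y.1) : Fin (L + D)) = y.2 := by
          apply Fin.ext
          rw [haddval y.1 (y.2 - y.1) (by rw [hsub]; have := y.2.isLt; omega), hsub]
          omega
        show (y.1, y.1 + (y.2 - y.1)) = y
        rw [this]
      · intro x hx
        rfl
    rw [step2, hU]
    rw [Finset.sum_filter]
    rw [Finset.sum_product]
  have h0col : ∑ m : Fin (L + D), psi (L + D) 0 A m * psi (L + D) 0 X (sh m)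
      = (1/2 : ℂ) * Dg := by
    rw [hDg, Finset.mul_sum]
    exact Finset.sum_congr rfl fun m _ => hzero m
  have hzsplit : z = (1/2 : ℂ) * Dg + U := by
    rw [hzdef, ← Finset.add_sum_erase Finset.univ _ (Finset.mem_univ (0 : Fin (L + D))),
      h0col, hoff]
  have hDgstar : star Dg = Dg := by
    rw [hDg, star_sum]
    exact Finset.sum_congr rfl fun a _ => (hq_star a a).symm
  rw [hzsplit]
  have h12 : (starRingEnd ℂ) ((1/2 : ℂ) * Dg + U) = (1/2 : ℂ) * Dg + star U := by
    rw [map_add, _root_.map_mul]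
    rw [show (starRingEnd ℂ) Dg = Dg from hDgstar]
    rw [show (starRingEnd ℂ) U = star U from rfl, map_div₀, _root_.map_one, Complex.conj_ofNat]
  rw [h12]
  ring
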